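/- Let m ≥ n ≥ 2 and let Γ be an m×n random matrix with independent standard Gaussian N(0,1) entries, k = m − n + 1, and s₁(Γ) the smallest eigenvalue of ΓᵀΓ. Then the exponent k/2 is optimal in the tail bound: for any γ > k/2 there is no constant δ > 0 such that P(s₁(Γ) ≤ ε) ≤ (δε)^γ for all ε > 0. -/

import Mathlib

open MeasureTheory ProbabilityTheory ENNReal Matrix

noncomputable section

/-- The smallest eigenvalue `s₁(A)` of the symmetric positive semidefinite matrix `AᵀA`. -/
def s1 {m n : ℕ} (A : Matrix (Fin m) (Fin n) ℝ) : ℝ :=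
  ⨅ i, (Matrix.isHermitian_conjTranspose_mul_self A).eigenvalues i

/-- The law of an `m × n` random matrix with i.i.d. standard Gaussian `N(0,1)` entries. -/
def wishartLaw (m n : ℕ) : Measure (Fin m → Fin n → ℝ) :=
  Measure.pi fun _ => Measure.pi fun _ => gaussianReal 0 1

open Real Set Filter Topology

/-!
Write `n = N + 1` and `m = k + N`. If the last `N` rows `u` of `Γ` lie in a small ball around
`(0 | I)`, the block formed by their last `N` columns is invertible with inverse of norm at most
`2`, so `u` has a kernel vector `v = (1, -a)` with `‖a‖ ≤ 2`, depending measurably on `u`. Then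
`s₁(Γ) ≤ |Γ v|² ≤ ∑_{i < k} ⟨Γᵢ, v⟩²`. Given `u`, the first `k` rows are independent and each
satisfies `|⟨Γᵢ, v⟩| ≤ t` with probability at least `c t`: condition on the last `N` coordinates of
`Γᵢ` and use that the Gaussian density is bounded below on bounded sets. By Fubini,
`P(s₁(Γ) ≤ k t²) ≥ c' tᵏ`, which beats `(δ k t²)^γ` as `t → 0` when `γ > k / 2`.
-/

instance : (gaussianReal 0 1).IsOpenPosMeasure :=
  (gaussianReal_absolutelyContinuous' 0 one_ne_zero).isOpenPosMeasure

section Rayleigh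

variable {ι : Type*} [Fintype ι] [DecidableEq ι]

lemma Matrix.IsHermitian.iInf_eigenvalues_mul_dotProduct_le {H : Matrix ι ι ℝ}
    (hH : H.IsHermitian) (v : ι → ℝ) :
    (⨅ i, hH.eigenvalues i) * (v ⬝ᵥ v) ≤ v ⬝ᵥ (H *ᵥ v) := by
  set U : Matrix ι ι ℝ := (hH.eigenvectorUnitary : Matrix ι ι ℝ)
  have hUU : U * Uᵀ = 1 := by
    simpa [star_eq_conjTranspose] using (Unitary.mem_iff.mp hH.eigenvectorUnitary.2).2
  set w := Uᵀ *ᵥ v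
  have hquad : v ⬝ᵥ (H *ᵥ v) = ∑ i, hH.eigenvalues i * w i ^ 2 := by
    conv_lhs => rw [hH.spectral_theorem, Unitary.conjStarAlgAut_apply]
    rw [← mulVec_mulVec, ← mulVec_mulVec, dotProduct_mulVec, ← mulVec_transpose]
    change w ⬝ᵥ (diagonal hH.eigenvalues *ᵥ w) = _
    simp only [dotProduct, mulVec_diagonal]
    exact Finset.sum_congr rfl fun i _ => by ring
  have hnorm : v ⬝ᵥ v = ∑ i, w i ^ 2 := by
    have : w ⬝ᵥ w = v ⬝ᵥ v := by
      rw [dotProduct_mulVec, vecMul_transpose, mulVec_mulVec, hUU, one_mulVec]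
    rw [← this]
    simp only [dotProduct, sq]
  rw [hquad, hnorm, Finset.mul_sum]
  gcongr with i
  exact ciInf_le (Finite.bddBelow_range _) i

end Rayleigh

lemma s1_nonneg {m n : ℕ} (A : Matrix (Fin m) (Fin n) ℝ) : 0 ≤ s1 A :=
  Real.iInf_nonneg fun i => eigenvalues_conjTranspose_mul_self_nonneg A i

lemma s1_le_of_one_le_dotProduct {m n : ℕ} (A : Matrix (Fin m) (Fin n) ℝ) {v : Fin n → ℝ}
    (hv : 1 ≤ v ⬝ᵥ v) : s1 A ≤ (A *ᵥ v) ⬝ᵥ (A *ᵥ v) := by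
  have hray := (isHermitian_conjTranspose_mul_self A).iInf_eigenvalues_mul_dotProduct_le v
  have hquad : v ⬝ᵥ ((Aᴴ * A) *ᵥ v) = (A *ᵥ v) ⬝ᵥ (A *ᵥ v) := by
    rw [← mulVec_mulVec, dotProduct_mulVec, conjTranspose_eq_transpose_of_trivial,
      vecMul_transpose]
  rw [hquad] at hray
  exact (le_mul_of_one_le_right (s1_nonneg A) hv).trans hray

lemma norm_le_two_mul_norm_mulVec {ι : Type*} [Fintype ι] [DecidableEq ι]
    {T : Matrix ι ι ℝ} {r : ℝ} (hT : ∀ i j, |(T - 1) i j| ≤ r)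
    (hr : Fintype.card ι * r ≤ 1 / 2) (z : ι → ℝ) : ‖z‖ ≤ 2 * ‖T *ᵥ z‖ := by
  have hpert : ‖(T - 1) *ᵥ z‖ ≤ ‖z‖ / 2 := by
    refine (pi_norm_le_iff_of_nonneg (by positivity)).2 fun i => ?_
    calc ‖((T - 1) *ᵥ z) i‖ ≤ ∑ j, |(T - 1) i j| * |z j| := by
          simpa only [mulVec, dotProduct, Real.norm_eq_abs, abs_mul]
            using Finset.abs_sum_le_sum_abs (fun j => (T - 1) i j * z j) Finset.univ
      _ ≤ ∑ _j : ι, r * ‖z‖ := by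
          gcongr with j
          exacts [(abs_nonneg _).trans (hT i j), hT i j, norm_le_pi_norm z j]
      _ = (Fintype.card ι : ℝ) * r * ‖z‖ := by simp [mul_assoc]
      _ ≤ ‖z‖ / 2 := by nlinarith [norm_nonneg z]
  have hz : z = T *ᵥ z - (T - 1) *ᵥ z := by simp [sub_mulVec]
  have := norm_sub_le (T *ᵥ z) ((T - 1) *ᵥ z)
  rw [← hz] at this
  linarith

section KernelVector

variable {N : ℕ}

def tailBlock (u : Fin N → Fin (N + 1) → ℝ) : Matrix (Fin N) (Fin N) ℝ :=
  of fun i j => u i j.succ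

def kernelCoeffs (u : Fin N → Fin (N + 1) → ℝ) : Fin N → ℝ :=
  (tailBlock u)⁻¹ *ᵥ fun i => u i 0

def kernelVec (u : Fin N → Fin (N + 1) → ℝ) : Fin (N + 1) → ℝ :=
  vecCons 1 (-kernelCoeffs u)

def tailBlockCenter : Fin N → Fin (N + 1) → ℝ :=
  fun i => vecCons 0 ((1 : Matrix (Fin N) (Fin N) ℝ) i)

-- The radius `r` is chosen so that `N * r ≤ 1 / 2` and `r ≤ 1`.
def tailBlockBall : Set (Fin N → Fin (N + 1) → ℝ) :=
  Metric.ball tailBlockCenter (1 / (2 * (N + 1)))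

lemma one_le_kernelVec_dotProduct_self (u : Fin N → Fin (N + 1) → ℝ) :
    1 ≤ kernelVec u ⬝ᵥ kernelVec u := by
  simpa [kernelVec] using dotProduct_star_self_nonneg (kernelCoeffs u)

lemma measurable_kernelVec : Measurable (kernelVec (N := N)) := by
  have hT : Continuous (tailBlock (N := N)) := by
    unfold tailBlock; fun_prop
  have hcoeffs : Measurable (kernelCoeffs (N := N)) := by
    have : kernelCoeffs (N := N) =
        fun u => (tailBlock u).det⁻¹ • ((tailBlock u).adjugate *ᵥ fun i => u i 0) := by
      funext u
      rw [kernelCoeffs, inv_def, smul_mulVec, Ring.inverse_eq_inv']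
    rw [this]
    exact hT.matrix_det.measurable.inv.smul
      (hT.matrix_adjugate.matrix_mulVec (by fun_prop)).measurable
  refine measurable_pi_lambda _ fun j => Fin.cases ?_ (fun j => ?_) j
  · simp only [kernelVec, cons_val_zero]
    exact measurable_const
  · simp only [kernelVec, cons_val_succ, Pi.neg_apply]
    exact ((measurable_pi_apply j).comp hcoeffs).neg

variable {u : Fin N → Fin (N + 1) → ℝ}

lemma abs_sub_tailBlockCenter_lt {r : ℝ} (hu : u ∈ Metric.ball tailBlockCenter r)
    (i : Fin N) (j : Fin (N + 1)) : |u i j - tailBlockCenter i j| < r :=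
  ((dist_le_pi_dist (u i) (tailBlockCenter i) j).trans
    (dist_le_pi_dist u tailBlockCenter i)).trans_lt hu

lemma norm_le_two_mul_norm_tailBlock_mulVec
    (hu : u ∈ tailBlockBall) (z : Fin N → ℝ) :
    ‖z‖ ≤ 2 * ‖tailBlock u *ᵥ z‖ := by
  refine norm_le_two_mul_norm_mulVec (r := 1 / (2 * (N + 1))) (fun i j => ?_) ?_ z
  · simpa [tailBlock, tailBlockCenter] using (abs_sub_tailBlockCenter_lt hu i j.succ).le
  · rw [Fintype.card_fin]
    field_simp
    linarith

lemma isUnit_det_tailBlock (hu : u ∈ tailBlockBall) :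
    IsUnit (tailBlock u).det := by
  refine (isUnit_iff_isUnit_det _).1 (mulVec_injective_iff_isUnit.1 fun z z' hzz' => ?_)
  have := norm_le_two_mul_norm_tailBlock_mulVec hu (z - z')
  rw [mulVec_sub, hzz', sub_self, norm_zero, mul_zero] at this
  exact sub_eq_zero.1 (norm_le_zero_iff.1 this)

lemma tailBlock_mulVec_kernelCoeffs
    (hu : u ∈ tailBlockBall) :
    tailBlock u *ᵥ kernelCoeffs u = fun i => u i 0 := by
  rw [kernelCoeffs, mulVec_mulVec, mul_nonsing_inv _ (isUnit_det_tailBlock hu), one_mulVec]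

lemma norm_kernelCoeffs_le (hu : u ∈ tailBlockBall) :
    ‖kernelCoeffs u‖ ≤ 2 := by
  have hcol : ‖fun i => u i 0‖ ≤ 1 := by
    refine (pi_norm_le_iff_of_nonneg zero_le_one).2 fun i => ?_
    have hr : 1 / (2 * ((N : ℝ) + 1)) ≤ 1 := by
      rw [div_le_one (by positivity)]
      linarith [(N.cast_nonneg : (0 : ℝ) ≤ N)]
    simpa [tailBlockCenter] using (abs_sub_tailBlockCenter_lt hu i 0).le.trans hr
  have := norm_le_two_mul_norm_tailBlock_mulVec hu (kernelCoeffs u)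
  rw [tailBlock_mulVec_kernelCoeffs hu] at this
  linarith

lemma mulVec_kernelVec (hu : u ∈ tailBlockBall) :
    of u *ᵥ kernelVec u = 0 := by
  funext i
  have := congrFun (tailBlock_mulVec_kernelCoeffs hu) i
  simp only [mulVec, dotProduct, tailBlock, of_apply] at this
  simp [mulVec, kernelVec, dotProduct, Fin.sum_univ_succ, this]

end KernelVector

lemma ofReal_gaussianPDFReal_mul_le_gaussianReal_Icc {c t R : ℝ} (hR : |c| + t ≤ R) :
    ENNReal.ofReal (gaussianPDFReal 0 1 R * (2 * t)) ≤ gaussianReal 0 1 (Icc (c - t) (c + t)) := by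
  have hpdf : ∀ x ∈ Icc (c - t) (c + t),
      ENNReal.ofReal (gaussianPDFReal 0 1 R) ≤ gaussianPDF 0 1 x := by
    intro x hx
    refine ENNReal.ofReal_le_ofReal ?_
    have hxR : x ^ 2 ≤ R ^ 2 := by
      refine sq_le_sq' ?_ ?_ <;> linarith [hx.1, hx.2, neg_abs_le c, le_abs_self c]
    simp only [gaussianPDFReal, NNReal.coe_one, mul_one, sub_zero]
    gcongr
  rw [gaussianReal_apply 0 one_ne_zero, ENNReal.ofReal_mul (gaussianPDFReal_nonneg _ _ _)]
  calc ENNReal.ofReal (gaussianPDFReal 0 1 R) * ENNReal.ofReal (2 * t)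
      = ∫⁻ _ in Icc (c - t) (c + t), ENNReal.ofReal (gaussianPDFReal 0 1 R) := by
        rw [setLIntegral_const, Real.volume_Icc, mul_comm]
        ring_nf
    _ ≤ ∫⁻ x in Icc (c - t) (c + t), gaussianPDF 0 1 x :=
        setLIntegral_mono (measurable_gaussianPDF 0 1) hpdf

lemma MeasureTheory.Measure.mul_le_prod_apply {α β : Type*} [MeasurableSpace α]
    [MeasurableSpace β] {μ : Measure α} {ν : Measure β} [SFinite μ] [SFinite ν]
    {s : Set (α × β)} (hs : MeasurableSet s) {A : Set β} {b : ℝ≥0∞}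
    (h : ∀ y ∈ A, b ≤ μ ((·, y) ⁻¹' s)) : ν A * b ≤ μ.prod ν s :=
  calc ν A * b = ∫⁻ _ in A, b ∂ν := by rw [setLIntegral_const, mul_comm]
    _ ≤ ∫⁻ y in A, μ ((·, y) ⁻¹' s) ∂ν := setLIntegral_mono (measurable_measure_prodMk_right hs) h
    _ ≤ ∫⁻ y, μ ((·, y) ⁻¹' s) ∂ν := setLIntegral_le_lintegral _ _
    _ = μ.prod ν s := (Measure.prod_apply_symm hs).symm

lemma measurePreserving_castAdd_natAdd {X : Type*} [MeasurableSpace X] (μ : Measure X)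
    [SigmaFinite μ] (k N : ℕ) :
    MeasurePreserving (fun x : Fin (k + N) → X => (fun i => x (Fin.castAdd N i),
        fun j => x (Fin.natAdd k j)))
      (Measure.pi fun _ => μ) ((Measure.pi fun _ => μ).prod (Measure.pi fun _ => μ)) :=
  ((measurePreserving_piCongrLeft (fun _ => μ) finSumFinEquiv).symm _).trans
    (measurePreserving_sumPiEquivProdPi (fun _ => μ))

lemma exists_mul_ofReal_le_pi_gaussianReal_abs_dotProduct_cons_le (N : ℕ) (B : ℝ) :
    ∃ c : ℝ≥0∞, c ≠ 0 ∧ ∀ a : Fin N → ℝ, ‖a‖ ≤ B → ∀ t ∈ Icc (0 : ℝ) 1,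
      c * ENNReal.ofReal t ≤
        Measure.pi (fun _ : Fin (N + 1) => gaussianReal 0 1) {y | |y ⬝ᵥ vecCons 1 a| ≤ t} := by
  set R := N * B + 1
  refine ⟨Measure.pi (fun _ : Fin N => gaussianReal 0 1) (Metric.closedBall 0 1) *
      ENNReal.ofReal (gaussianPDFReal 0 1 R * 2), ?_, fun a ha t ht => ?_⟩
  · exact mul_ne_zero (Metric.measure_closedBall_pos _ _ one_pos).ne'
      (ENNReal.ofReal_pos.2 (mul_pos (gaussianPDFReal_pos _ _ _ one_ne_zero) two_pos)).ne'
  set s : Set (ℝ × (Fin N → ℝ)) := {p | |p.1 + p.2 ⬝ᵥ a| ≤ t}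
  have hs : MeasurableSet s := measurableSet_le (by fun_prop) measurable_const
  have hpre : MeasurableEquiv.piFinSuccAbove (fun _ => ℝ) 0 ⁻¹' s =
      {y | |y ⬝ᵥ vecCons 1 a| ≤ t} := by
    ext y
    simp only [MeasurableEquiv.piFinSuccAbove_apply, Fin.insertNthEquiv_zero, preimage_ofPred_eq,
      Fin.consEquiv_symm_apply, mem_ofPred_eq, dotProduct_cons, vecHead, mul_one, vecTail, s]
    rfl
  rw [← hpre, (measurePreserving_piFinSuccAbove (fun _ => gaussianReal 0 1) 0).measure_preimage
    hs.nullMeasurableSet, mul_assoc,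
    ← ENNReal.ofReal_mul (mul_nonneg (gaussianPDFReal_nonneg _ _ _) zero_le_two), mul_assoc]
  refine Measure.mul_le_prod_apply hs fun z hz => ?_
  have hza : |z ⬝ᵥ a| ≤ N * B := by
    have hz1 : ‖z‖ ≤ 1 := mem_closedBall_zero_iff.1 hz
    calc |z ⬝ᵥ a| ≤ ∑ j, |z j| * |a j| := by
          simpa only [dotProduct, abs_mul]
            using Finset.abs_sum_le_sum_abs (fun j => z j * a j) Finset.univ
      _ ≤ ∑ _j : Fin N, 1 * B := by
          gcongr with j
          exacts [(norm_le_pi_norm z j).trans hz1, (norm_le_pi_norm a j).trans ha]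
      _ = N * B := by simp
  have hsec : (·, z) ⁻¹' s = Icc (-(z ⬝ᵥ a) - t) (-(z ⬝ᵥ a) + t) := by
    ext x
    simp only [s, mem_preimage, mem_ofPred_eq, mem_Icc, abs_le]
    constructor <;> rintro ⟨h₁, h₂⟩ <;> constructor <;> linarith
  rw [hsec]
  exact ofReal_gaussianPDFReal_mul_le_gaussianReal_Icc (by rw [abs_neg]; linarith [ht.2])

lemma s1_le_mul_sq_of_rows_dotProduct {k N n : ℕ} (x : Fin (k + N) → Fin n → ℝ) {v : Fin n → ℝ}
    (hv : 1 ≤ v ⬝ᵥ v) {t : ℝ} (hbot : ∀ i : Fin k, |x (Fin.castAdd N i) ⬝ᵥ v| ≤ t)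
    (htop : ∀ j : Fin N, x (Fin.natAdd k j) ⬝ᵥ v = 0) : s1 (of x) ≤ k * t ^ 2 :=
  calc s1 (of x) ≤ (of x *ᵥ v) ⬝ᵥ (of x *ᵥ v) := s1_le_of_one_le_dotProduct _ hv
    _ = ∑ i : Fin k, |x (Fin.castAdd N i) ⬝ᵥ v| ^ 2 := by
        rw [dotProduct, Fin.sum_univ_add]
        simp [mulVec, htop, sq]
    _ ≤ ∑ _i : Fin k, t ^ 2 := by
        gcongr with i
        exact hbot i
    _ = k * t ^ 2 := by simp

lemma exists_ofReal_mul_pow_le_wishartLaw_s1_le (k N : ℕ) :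
    ∃ c : ℝ, 0 < c ∧ ∀ t ∈ Icc (0 : ℝ) 1,
      ENNReal.ofReal (c * t ^ k) ≤ wishartLaw (k + N) (N + 1) {x | s1 (of x) ≤ k * t ^ 2} := by
  set ν := Measure.pi fun _ : Fin (N + 1) => gaussianReal 0 1
  have : ν.IsOpenPosMeasure := Measure.pi.isOpenPosMeasure _
  set U := tailBlockBall (N := N)
  obtain ⟨b, hb0, hb⟩ := exists_mul_ofReal_le_pi_gaussianReal_abs_dotProduct_cons_le N 2
  have hU : Measure.pi (fun _ : Fin N => ν) U * b ^ k ≠ 0 :=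
    mul_ne_zero (Metric.measure_ball_pos _ _ (by positivity)).ne' (pow_ne_zero _ hb0)
  obtain ⟨c, hc0, hc⟩ := ENNReal.lt_iff_exists_real_btwn.1 (pos_iff_ne_zero.2 hU)
  refine ⟨c, ENNReal.ofReal_pos.1 hc.1, fun t ht => ?_⟩
  set s : Set ((Fin k → Fin (N + 1) → ℝ) × (Fin N → Fin (N + 1) → ℝ)) :=
    {p | p.2 ∈ U ∧ ∀ i, |p.1 i ⬝ᵥ kernelVec p.2| ≤ t}
  have hs : MeasurableSet s := by
    have := measurable_kernelVec (N := N)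
    simp only [s, ofPred_and, ofPred_forall]
    exact (measurable_snd Metric.isOpen_ball.measurableSet).inter
      (MeasurableSet.iInter fun i => measurableSet_le (by fun_prop) measurable_const)
  have hsub : (fun x : Fin (k + N) → Fin (N + 1) → ℝ => (fun i => x (Fin.castAdd N i),
      fun j => x (Fin.natAdd k j))) ⁻¹' s ⊆ {x | s1 (of x) ≤ k * t ^ 2} := by
    rintro x ⟨hU, hbot⟩
    exact s1_le_mul_sq_of_rows_dotProduct x (one_le_kernelVec_dotProduct_self _) hbot
      fun j => congrFun (mulVec_kernelVec hU) j
  have hsec : ∀ u ∈ U, (b * ENNReal.ofReal t) ^ k ≤ Measure.pi (fun _ : Fin k => ν)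
      ((·, u) ⁻¹' s) := by
    intro u hu
    have : (·, u) ⁻¹' s = Set.pi univ fun _ => {y | |y ⬝ᵥ kernelVec u| ≤ t} := by
      ext w
      simp [s, hu]
    rw [this, Measure.pi_pi, Finset.prod_const, Finset.card_univ, Fintype.card_fin]
    gcongr
    exact hb (-kernelCoeffs u) (by rw [norm_neg]; exact norm_kernelCoeffs_le hu) t ht
  calc ENNReal.ofReal (c * t ^ k)
      ≤ Measure.pi (fun _ : Fin N => ν) U * (b * ENNReal.ofReal t) ^ k := by
        rw [ENNReal.ofReal_mul hc0, ENNReal.ofReal_pow ht.1, mul_pow, ← mul_assoc]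
        gcongr
        exact hc.2.le
    _ ≤ ((Measure.pi fun _ => ν).prod (Measure.pi fun _ => ν)) s :=
        Measure.mul_le_prod_apply hs hsec
    _ ≤ wishartLaw (k + N) (N + 1) {x | s1 (of x) ≤ k * t ^ 2} := by
        rw [← (measurePreserving_castAdd_natAdd ν k N).measure_preimage hs.nullMeasurableSet]
        exact measure_mono hsub

lemma exists_mul_rpow_lt_mul_rpow {a b c : ℝ} (hc : 0 < c) (hab : a < b) (C : ℝ) :
    ∃ t ∈ Ioc (0 : ℝ) 1, C * t ^ b < c * t ^ a := by
  have hlim : Tendsto (fun t : ℝ => C * t ^ (b - a)) (𝓝[>] 0) (𝓝 0) := by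
    have hpos : 0 < b - a := sub_pos.2 hab
    simpa [zero_rpow hpos.ne'] using ((continuousAt_rpow_const 0 (b - a)
      (Or.inr hpos.le)).tendsto.mono_left nhdsWithin_le_nhds).const_mul C
  obtain ⟨t, hCt, ht⟩ := ((hlim.eventually (gt_mem_nhds hc)).and (Ioc_mem_nhdsGT one_pos)).exists
  refine ⟨t, ht, ?_⟩
  have := mul_lt_mul_of_pos_right hCt (rpow_pos_of_pos ht.1 a)
  rwa [mul_assoc, ← rpow_add ht.1, sub_add_cancel] at this

/-- optimality of the exponent `k/2` in the Wishart tail bound: if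
`m ≥ n ≥ 2`, `Γ` is `m × n` with i.i.d. `N(0,1)` entries and `k = m - n + 1`, then for any
`γ > k/2` there is no constant `δ > 0` such that `P(s₁(Γ) ≤ ε) ≤ (δε)^γ` for all `ε > 0`. -/
theorem stmt12 (n m k : ℕ) (hn : 2 ≤ n) (hnm : n ≤ m) (hk : k = m - n + 1) :
    ∀ γ : ℝ, (k : ℝ) / 2 < γ →
      ¬ ∃ δ : ℝ, 0 < δ ∧ ∀ ε : ℝ, 0 < ε →
        wishartLaw m n {x | s1 (Matrix.of x) ≤ ε} ≤ ENNReal.ofReal ((δ * ε) ^ γ) := by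
  rintro γ hγ ⟨δ, hδ, hbound⟩
  obtain ⟨N, rfl⟩ : ∃ N, n = N + 1 := ⟨n - 1, by omega⟩
  obtain rfl : m = k + N := by omega
  have hk0 : (0 : ℝ) < k := by exact_mod_cast (show 0 < k by omega)
  obtain ⟨c, hc, hlow⟩ := exists_ofReal_mul_pow_le_wishartLaw_s1_le k N
  obtain ⟨t, ht, hlt⟩ := exists_mul_rpow_lt_mul_rpow hc (show (k : ℝ) < 2 * γ by linarith)
    ((δ * k) ^ γ)
  have hle := (hlow t ⟨ht.1.le, ht.2⟩).trans (hbound _ (by have := ht.1; positivity))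
  rw [ENNReal.ofReal_le_ofReal_iff (by positivity)] at hle
  have hrpow : (δ * (k * t ^ 2)) ^ γ = (δ * k) ^ γ * t ^ (2 * γ) := by
    rw [← mul_assoc, mul_rpow (by positivity) (by positivity), rpow_mul ht.1.le]
    norm_cast
  rw [hrpow, ← Real.rpow_natCast] at hle
  linarith

end
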